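/- For any p, q in the monoid of queue actions Q, the following are equivalent: (1) p and q are related by the reflexive-transitive closure of transposition; (2) p is conjugate to q (there exists x ∈ Q with px = xq); (3) q is conjugate to p; (4) π(p) ∼ π(q) and π̄(p) ∼ π̄(q) as words in the free monoid A*, where ∼ is transposition (cyclic conjugacy) in A*. -/

import Mathlib

/-!
A word `u` succeeds on a queue `q` exactly when `prR u` is a prefix of `q ++ prW u` and `q` is at
least as long as the overhang of `u`; it then leaves `q ++ prW u` with the prefix `prR u` removed.
So the class of `u` is determined by its projections and by how the overhang compares with queue
lengths, and probing with queues padded by two distinct letters shows that equivalent words have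
equal projections. Hence `p x = x q` gives equations `α γ = γ β` in `A*` for both projections,
which force them to be transposed.

Conversely, every class is one transposition away from a class `W w ++ R σ` that writes before it
reads. Rotating `σ` by one letter is a transposition as long as `σ` is not a prefix of `w`, and at
most one rotation of `σ` is such a prefix, so all rotations of `σ` are connected; rotating `w` is
a transposition followed by a return to the normal form, at the cost of rotating `σ`.
-/

/-- A basic queue action: write a letter or read a letter. -/
inductive Act (A : Type) : Type
  | wr (a : A)
  | rd (a : A)
deriving DecidableEq

variable {A : Type} [DecidableEq A]

/-- The action of words over `Act A` on queue states `A* ∪ {⊥}` (⊥ = `none`). -/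
def act : Option (List A) → List (Act A) → Option (List A)
  | q, [] => q
  | none, _ :: _ => none
  | some q, (Act.wr a) :: u => act (some (q ++ [a])) u
  | some q, (Act.rd a) :: u =>
    match q with
    | [] => none
    | b :: q' => if b = a then act (some q') u else none

/-- Two words over `Act A` are equivalent if they act identically on all queues. -/
def qequiv (u v : List (Act A)) : Prop := ∀ q : List A, act (some q) u = act (some q) v

/-- Writing the word `w`. -/
def W (w : List A) : List (Act A) := w.map Act.wr

/-- Reading the word `w` (the barred copy of `w`). -/
def R (w : List A) : List (Act A) := w.map Act.rd

/-- `shuffle s` is the word `s₁ s̄₁ s₂ s̄₂ … sₖ s̄ₖ`. -/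
def shuffle (s : List A) : List (Act A) := s.flatMap fun a => [Act.wr a, Act.rd a]

/-- The projection to write letters. -/
def prW (w : List (Act A)) : List A :=
  w.filterMap fun x => match x with | Act.wr a => some a | Act.rd _ => none

/-- The projection to read letters (with the bars removed). -/
def prR (w : List (Act A)) : List A :=
  w.filterMap fun x => match x with | Act.wr _ => none | Act.rd a => some a

theorem act_append (u v : List (Act A)) : ∀ q, act q (u ++ v) = act (act q u) v := by
  induction u with
  | nil =>
      intro q
      cases q <;> rfl
  | cons x u ih =>
      intro q
      cases q with
      | none =>
          simp only [List.cons_append, act]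
          cases v with
          | nil => rfl
          | cons _ _ => rfl
      | some q =>
          cases x with
          | wr a => simpa [act] using ih _
          | rd a =>
              cases q with
              | nil =>
                  simp only [List.cons_append, act]
                  cases v with
                  | nil => rfl
                  | cons _ _ => rfl
              | cons b q' =>
                  by_cases h : b = a
                  · simp [List.cons_append, act, h, ih]
                  · simp only [List.cons_append, act, if_neg h]
                    cases v with
                    | nil => rfl
                    | cons _ _ => rfl

/-- The setoid of queue-action equivalence. -/
def qsetoid (A : Type) [DecidableEq A] : Setoid (List (Act A)) :=
  ⟨qequiv, ⟨fun _ _ => rfl, fun h q => (h q).symm, fun h1 h2 q => (h1 q).trans (h2 q)⟩⟩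

/-- The monoid of queue actions. -/
def QAct (A : Type) [DecidableEq A] : Type := Quotient (qsetoid A)

theorem act_none : ∀ v : List (Act A), act (none : Option (List A)) v = none
  | [] => rfl
  | _ :: _ => rfl

theorem qequiv_append {u u' v v' : List (Act A)} (hu : qequiv u u') (hv : qequiv v v') :
    qequiv (u ++ v) (u' ++ v') := by
  intro q
  rw [act_append, act_append, hu q]
  cases h : act (some q) u' with
  | none => rw [act_none, act_none]
  | some q' => exact hv q'

instance : Monoid (QAct A) where
  mul := Quotient.map₂ (· ++ ·) (fun _ _ hu _ _ hv => qequiv_append hu hv)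
  one := Quotient.mk (qsetoid A) []
  mul_assoc := by
    rintro ⟨u⟩ ⟨v⟩ ⟨w⟩
    exact congrArg (Quotient.mk (qsetoid A)) (List.append_assoc u v w)
  one_mul := by
    rintro ⟨u⟩
    rfl
  mul_one := by
    rintro ⟨u⟩
    exact congrArg (Quotient.mk (qsetoid A)) (List.append_nil u)

/-- The class of a word in the monoid of queue actions. -/
def cls (w : List (Act A)) : QAct A := Quotient.mk (qsetoid A) w

theorem cls_mul (u v : List (Act A)) : cls u * cls v = cls (u ++ v) := rfl

open Relation

set_option linter.unusedSectionVars false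

section Transposition

variable {M : Type*} [Monoid M]

def Transposed (p q : M) : Prop := ∃ r s : M, p = r * s ∧ q = s * r

theorem Transposed.symm {p q : M} (h : Transposed p q) : Transposed q p := by
  obtain ⟨r, s, rfl, rfl⟩ := h
  exact ⟨s, r, rfl, rfl⟩

instance : Std.Symm (Transposed (M := M)) := ⟨fun _ _ => Transposed.symm⟩

theorem exists_mul_eq_mul_of_reflTransGen_transposed {p q : M}
    (h : ReflTransGen Transposed p q) : ∃ x, p * x = x * q := by
  induction h with
  | refl => exact ⟨1, by simp⟩
  | tail _ hstep ih =>
    obtain ⟨x, hx⟩ := ih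
    obtain ⟨r, s, rfl, rfl⟩ := hstep
    exact ⟨x * r, by rw [← mul_assoc, hx]; simp only [mul_assoc]⟩

end Transposition

namespace List

variable {α : Type*}

theorem isRotated_iff_exists_append {l l' : List α} :
    l ~r l' ↔ ∃ r s, l = r ++ s ∧ l' = s ++ r := by
  refine ⟨fun h => ?_, fun ⟨r, s, hl, hl'⟩ => hl ▸ hl' ▸ isRotated_append⟩
  obtain ⟨n, hn, rfl⟩ := isRotated_iff_mod.1 h
  exact ⟨l.take n, l.drop n, (take_append_drop n l).symm, rotate_eq_drop_append_take hn⟩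

theorem isRotated_of_append_eq_append {p q t : List α} (h : p ++ t = t ++ q) : p ~r q := by
  rcases p with _ | ⟨a, p⟩
  · simp_all
  rcases append_eq_append_iff.1 h with ⟨t', ht, h'⟩ | ⟨s, hp, rfl⟩
  · have : t'.length < t.length := by simp [ht]
    exact isRotated_of_append_eq_append (ht.symm.trans h')
  · exact hp ▸ isRotated_append
termination_by t.length

theorem eq_of_append_cons_eq_append_cons {r r' x x' y y' : List α} {a b : α} (hab : a ≠ b)
    (ha : r ++ a :: x = r' ++ a :: y) (hb : r ++ b :: x' = r' ++ b :: y') : r = r' := by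
  wlog hle : r.length ≤ r'.length generalizing r r' x x' y y'
  · exact (this ha.symm hb.symm (by omega)).symm
  rcases hle.lt_or_eq with hlt | heq
  · have ha' := congrArg (·[r.length]?) ha
    have hb' := congrArg (·[r.length]?) hb
    simp only [getElem?_append_right le_rfl, getElem?_append_left hlt, Nat.sub_self,
      getElem?_cons_zero] at ha' hb'
    exact absurd (Option.some_injective _ (ha'.trans hb'.symm)) hab
  · exact (append_inj ha heq).1

end List

@[simp] theorem prW_append (u v : List (Act A)) : prW (u ++ v) = prW u ++ prW v :=
  List.filterMap_append

@[simp] theorem prR_append (u v : List (Act A)) : prR (u ++ v) = prR u ++ prR v :=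
  List.filterMap_append

@[simp] theorem prW_wr_cons (a : A) (u : List (Act A)) : prW (Act.wr a :: u) = a :: prW u := rfl
@[simp] theorem prW_rd_cons (a : A) (u : List (Act A)) : prW (Act.rd a :: u) = prW u := rfl
@[simp] theorem prR_wr_cons (a : A) (u : List (Act A)) : prR (Act.wr a :: u) = prR u := rfl
@[simp] theorem prR_rd_cons (a : A) (u : List (Act A)) : prR (Act.rd a :: u) = a :: prR u := rfl

@[simp] theorem prW_W (w : List A) : prW (W w) = w := by
  simp [prW, W, List.filterMap_map]

@[simp] theorem prR_W (w : List A) : prR (W w) = [] := by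
  simp [prR, W, List.filterMap_map]

@[simp] theorem prW_R (w : List A) : prW (R w) = [] := by
  simp [prW, R, List.filterMap_map]

@[simp] theorem prR_R (w : List A) : prR (R w) = w := by
  simp [prR, R, List.filterMap_map]

@[simp] theorem W_append (x y : List A) : W (x ++ y) = W x ++ W y := List.map_append
@[simp] theorem R_append (x y : List A) : R (x ++ y) = R x ++ R y := List.map_append

/-- The least initial queue length with which `u` never reads from an empty queue. -/
def overhang : List (Act A) → ℕ
  | [] => 0
  | Act.wr _ :: u => overhang u - 1
  | Act.rd _ :: u => overhang u + 1

@[simp] theorem overhang_W_append (w : List A) (u : List (Act A)) :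
    overhang (W w ++ u) = overhang u - w.length := by
  induction w with
  | nil => rfl
  | cons a w ih =>
    simp only [W, List.map_cons, List.cons_append, overhang, List.length_cons] at ih ⊢
    omega

@[simp] theorem overhang_R_append (x : List A) (u : List (Act A)) :
    overhang (R x ++ u) = overhang u + x.length := by
  induction x with
  | nil => rfl
  | cons a x ih =>
    simp only [R, List.map_cons, List.cons_append, overhang, List.length_cons] at ih ⊢
    omega

@[simp] theorem overhang_R (x : List A) : overhang (R x) = x.length := by
  simpa [overhang] using overhang_R_append x []

theorem overhang_le_length_prR : ∀ u : List (Act A), overhang u ≤ (prR u).length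
  | [] => le_rfl
  | Act.wr _ :: u => (Nat.sub_le _ 1).trans (overhang_le_length_prR u)
  | Act.rd _ :: u => Nat.succ_le_succ (overhang_le_length_prR u)

theorem act_some_eq : ∀ (u : List (Act A)) (q : List A),
    act (some q) u =
      if prR u <+: q ++ prW u ∧ overhang u ≤ q.length
      then some ((q ++ prW u).drop (prR u).length) else none
  | [], q => by simp [act, prR, prW, overhang]
  | Act.wr a :: u, q => by
    simp [act, act_some_eq u, overhang]
  | Act.rd c :: u, [] => by simp [act, overhang]
  | Act.rd c :: u, b :: q => by
    by_cases hbc : b = c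
    · subst hbc
      simp [act, act_some_eq u, overhang]
    · simp [act, hbc, Ne.symm hbc]

theorem append_prW_eq_of_act_eq_some {u : List (Act A)} {q q' : List A}
    (h : act (some q) u = some q') : q ++ prW u = prR u ++ q' := by
  rw [act_some_eq] at h
  split_ifs at h with hq
  obtain ⟨t, ht⟩ := hq.1
  rw [← ht, List.drop_left] at h
  rw [← ht, Option.some_injective _ h]

theorem act_prR_append (u : List (Act A)) {l : List A} (hl : overhang u ≤ l.length) :
    act (some (prR u ++ l)) u = some (l ++ prW u) := by
  rw [act_some_eq, if_pos ⟨by simp, by rw [List.length_append]; omega⟩, List.append_assoc,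
    List.drop_left]

theorem prW_eq_and_prR_eq_of_qequiv [Nontrivial A] {u v : List (Act A)} (h : qequiv u v) :
    prW u = prW v ∧ prR u = prR v := by
  have probe : ∀ e : A, prR u ++ e :: (List.replicate (overhang u) e ++ prW v)
      = prR v ++ e :: (List.replicate (overhang u) e ++ prW u) := fun e => by
    have hu := act_prR_append u (l := List.replicate (overhang u + 1) e) (by simp)
    simpa [List.replicate_succ] using append_prW_eq_of_act_eq_some ((h _).symm.trans hu)
  obtain ⟨a, b, hab⟩ := exists_pair_ne A
  have hR := List.eq_of_append_cons_eq_append_cons hab (probe a) (probe b)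
  refine ⟨?_, hR⟩
  simpa [hR] using (probe a).symm

theorem cls_eq_of_overhang_le_iff {u v : List (Act A)} (hW : prW u = prW v) (hR : prR u = prR v)
    (h : ∀ q, prR u <+: q ++ prW u → (overhang u ≤ q.length ↔ overhang v ≤ q.length)) :
    cls u = cls v := by
  refine Quotient.sound fun q => ?_
  rw [act_some_eq, act_some_eq, ← hW, ← hR]
  by_cases hq : prR u <+: q ++ prW u
  · simp only [hq, h q hq, true_and]
  · simp only [hq, false_and, if_false]

theorem transposed_cls_append (X Y : List (Act A)) : Transposed (cls (X ++ Y)) (cls (Y ++ X)) :=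
  ⟨cls X, cls Y, rfl, rfl⟩

theorem exists_transposed_cls_W_append_R (u : List (Act A)) :
    ∃ τ, prR u ~r τ ∧ Transposed (cls u) (cls (W (prW u) ++ R τ)) := by
  have hk := overhang_le_length_prR u
  let τ₁ := (prR u).take (overhang u)
  let τ₂ := (prR u).drop (overhang u)
  refine ⟨τ₂ ++ τ₁, ?_, ?_⟩
  · simpa [τ₁, τ₂] using List.isRotated_append (l := τ₁) (l' := τ₂)
  -- once `τ₁` is read up front, the overhang is unchanged on every queue passing the prefix test
  have heq : cls u = cls (R τ₁ ++ (W (prW u) ++ R τ₂)) := by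
    refine cls_eq_of_overhang_le_iff (by simp) (by simp [τ₁, τ₂]) fun q hq => ?_
    have := hq.length_le
    simp only [List.length_append] at this
    simp only [overhang_R_append, overhang_W_append, overhang_R, List.length_drop,
      List.length_take, τ₁, τ₂]
    omega
  simpa [heq] using transposed_cls_append (R τ₁) (W (prW u) ++ R τ₂)

theorem transposed_cls_W_append_R_rotate_one {w σ : List A} (hσ : ¬ σ <+: w) :
    Transposed (cls (W w ++ R σ)) (cls (W w ++ R (σ.rotate 1))) := by
  rcases σ with _ | ⟨c, σ⟩
  · exact absurd List.nil_prefix hσ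
  -- the two words only disagree on the empty queue, which `hσ` excludes
  have heq : cls (W w ++ R (c :: σ)) = cls ([Act.rd c] ++ (W w ++ R σ)) := by
    refine cls_eq_of_overhang_le_iff (by simp [R]) (by simp [R]) fun q hq => ?_
    rcases q with _ | ⟨b, q⟩
    · exact absurd (by simpa using hq) hσ
    · simp only [overhang_W_append, overhang_R, List.length_cons, List.singleton_append,
        overhang]
      omega
  rw [heq]
  simpa [R] using transposed_cls_append [Act.rd c] (W w ++ R σ)

theorem reflTransGen_cls_W_append_R_rotate {w σ : List A} {n : ℕ}
    (h : ∀ i < n, ¬ σ.rotate i <+: w) :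
    ReflTransGen Transposed (cls (W w ++ R σ)) (cls (W w ++ R (σ.rotate n))) := by
  induction n with
  | zero => simp [ReflTransGen.refl]
  | succ n ih =>
    refine (ih fun i hi => h i (by omega)).tail ?_
    simpa [List.rotate_rotate] using transposed_cls_W_append_R_rotate_one (h n n.lt_succ_self)

theorem reflTransGen_cls_W_append_R_of_isRotated_of_prefix {w τ ρ : List A} (hτ : τ ~r ρ)
    (hρ : ρ <+: w) : ReflTransGen Transposed (cls (W w ++ R τ)) (cls (W w ++ R ρ)) := by
  classical
  have hex : ∃ n, τ.rotate n <+: w := by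
    obtain ⟨n, hn⟩ := hτ
    exact ⟨n, hn ▸ hρ⟩
  have hlen : (τ.rotate (Nat.find hex)).length = ρ.length := by simp [hτ.perm.length_eq]
  -- all rotations of `τ` have the same length, so at most one of them is a prefix of `w`
  have hfind : τ.rotate (Nat.find hex) = ρ :=
    (List.prefix_of_prefix_length_le (Nat.find_spec hex) hρ hlen.le).eq_of_length hlen
  rw [← hfind]
  exact reflTransGen_cls_W_append_R_rotate fun i hi => Nat.find_min hex hi

theorem reflTransGen_cls_W_append_R_of_isRotated (w : List A) {σ σ' : List A} (h : σ ~r σ') :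
    ReflTransGen Transposed (cls (W w ++ R σ)) (cls (W w ++ R σ')) := by
  by_cases hρ : ∃ ρ, σ ~r ρ ∧ ρ <+: w
  · obtain ⟨ρ, hσρ, hρw⟩ := hρ
    exact (reflTransGen_cls_W_append_R_of_isRotated_of_prefix hσρ hρw).trans
      (symm (reflTransGen_cls_W_append_R_of_isRotated_of_prefix (h.symm.trans hσρ) hρw))
  · push Not at hρ
    obtain ⟨n, rfl⟩ := h
    exact reflTransGen_cls_W_append_R_rotate fun i _ => hρ _ ⟨i, rfl⟩

theorem reflTransGen_cls_W_append_R {w w' σ σ' : List A} (hw : w ~r w') (hσ : σ ~r σ') :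
    ReflTransGen Transposed (cls (W w ++ R σ)) (cls (W w' ++ R σ')) := by
  obtain ⟨w₁, w₂, rfl, rfl⟩ := List.isRotated_iff_exists_append.1 hw
  have hfirst : Transposed (cls (W (w₁ ++ w₂) ++ R σ)) (cls (W w₂ ++ R σ ++ W w₁)) := by
    simpa using transposed_cls_append (W w₁) (W w₂ ++ R σ)
  obtain ⟨τ, hτ, hsecond⟩ := exists_transposed_cls_W_append_R (W w₂ ++ R σ ++ W w₁)
  simp only [prW_append, prR_append, prW_W, prW_R, prR_W, prR_R, List.append_nil,
    List.nil_append] at hτ hsecond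
  exact ((ReflTransGen.single hfirst).tail hsecond).trans
    (reflTransGen_cls_W_append_R_of_isRotated _ (hτ.symm.trans hσ))

theorem reflTransGen_transposed_cls_of_isRotated {u v : List (Act A)} (hW : prW u ~r prW v)
    (hR : prR u ~r prR v) : ReflTransGen Transposed (cls u) (cls v) := by
  obtain ⟨τ, hτ, hu⟩ := exists_transposed_cls_W_append_R u
  obtain ⟨τ', hτ', hv⟩ := exists_transposed_cls_W_append_R v
  exact (ReflTransGen.single hu).trans
    ((reflTransGen_cls_W_append_R hW (hτ.symm.trans (hR.trans hτ'))).tail hv.symm)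

theorem isRotated_prW_and_prR_of_cls_mul_eq_mul_cls [Nontrivial A] {u v : List (Act A)}
    {x : QAct A} (hx : cls u * x = x * cls v) : prW u ~r prW v ∧ prR u ~r prR v := by
  induction x using Quotient.inductionOn with | h X => ?_
  obtain ⟨hW, hR⟩ := prW_eq_and_prR_eq_of_qequiv (Quotient.exact hx : qequiv (u ++ X) (X ++ v))
  simp only [prW_append, prR_append] at hW hR
  exact ⟨List.isRotated_of_append_eq_append hW, List.isRotated_of_append_eq_append hR⟩

theorem reflTransGen_transposed_cls_iff [Nontrivial A] {u v : List (Act A)} :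
    ReflTransGen Transposed (cls u) (cls v) ↔ prW u ~r prW v ∧ prR u ~r prR v :=
  ⟨fun h => (exists_mul_eq_mul_of_reflTransGen_transposed h).elim fun _ =>
      isRotated_prW_and_prR_of_cls_mul_eq_mul_cls,
    fun h => reflTransGen_transposed_cls_of_isRotated h.1 h.2⟩

theorem exists_cls_mul_eq_mul_cls_iff [Nontrivial A] {u v : List (Act A)} :
    (∃ x, cls u * x = x * cls v) ↔ prW u ~r prW v ∧ prR u ~r prR v :=
  ⟨fun ⟨_, hx⟩ => isRotated_prW_and_prR_of_cls_mul_eq_mul_cls hx,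
    fun h => exists_mul_eq_mul_of_reflTransGen_transposed (reflTransGen_transposed_cls_iff.2 h)⟩

theorem stmt15_general [Nontrivial A] (u v : List (Act A)) :
    [ Relation.ReflTransGen (fun p q : QAct A => ∃ r s : QAct A, p = r * s ∧ q = s * r)
        (cls u) (cls v),
      ∃ x : QAct A, cls u * x = x * cls v,
      ∃ x : QAct A, cls v * x = x * cls u,
      (∃ r s : List A, prW u = r ++ s ∧ prW v = s ++ r) ∧
        (∃ r s : List A, prR u = r ++ s ∧ prR v = s ++ r) ].TFAE := by
  simp only [← List.isRotated_iff_exists_append]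
  tfae_have 1 ↔ 4 := reflTransGen_transposed_cls_iff
  tfae_have 2 ↔ 4 := exists_cls_mul_eq_mul_cls_iff
  tfae_have 3 ↔ 4 := by
    rw [exists_cls_mul_eq_mul_cls_iff, List.isRotated_comm, List.isRotated_comm (l := prR v)]
  tfae_finish

/-- Conjugacy in `Q`: for queue actions `p = [u]` and `q = [v]`, the following are
equivalent: (1) `p ∼* q` (refl-trans closure of transposition); (2) `p ≈ q`;
(3) `q ≈ p`; (4) the write projections and the read projections of `p` and `q` are
transposed words in the free monoid `A*`. -/
theorem stmt15 [Fintype A] [Nontrivial A] (u v : List (Act A)) :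
    [ Relation.ReflTransGen (fun p q : QAct A => ∃ r s : QAct A, p = r * s ∧ q = s * r)
        (cls u) (cls v),
      ∃ x : QAct A, cls u * x = x * cls v,
      ∃ x : QAct A, cls v * x = x * cls u,
      (∃ r s : List A, prW u = r ++ s ∧ prW v = s ++ r) ∧
        (∃ r s : List A, prR u = r ++ s ∧ prR v = s ++ r) ].TFAE :=
  stmt15_general u v
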